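/- Let m ≥ 1 and let U₁, W₁, U₂, W₂ be pairwise disjoint sets, each of size m. Let α : U₁ → W₁, β : W₁ → U₂ and γ : U₂ → W₂ be bijections, set δ = γ ∘ β ∘ α, and let G be the digraph on V = U₁ ∪ U₂ ∪ W₁ ∪ W₂ with color classes U = U₁ ∪ U₂ and W = W₁ ∪ W₂ whose edges are exactly: u α(u) for u ∈ U₁; w β(w) for w ∈ W₁; u γ(u) for u ∈ U₂; and u δ(u) for u ∈ U₁. For any permutation π of U₁, define φ : V → V by φ(x) = π(x) for x ∈ U₁, φ(x) = (α ∘ π ∘ α⁻¹)(x) for x ∈ W₁, φ(x) = ((β∘α) ∘ π ∘ (β∘α)⁻¹)(x) for x ∈ U₂, and φ(x) = (δ ∘ π ∘ δ⁻¹)(x) for x ∈ W₂. Then φ is a color-preserving automorphism of G, and the map π ↦ φ is an injective group homomorphism from Sym(U₁) into Aut_I(G). -/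

import Mathlib

/-!
On each of the four layers `φ` is `π` transported along the bijection from `U₁` to that layer
(`id`, `α`, `β ∘ α`, `δ`). Every edge of `G` is the graph of one of the maps `α`, `β`, `γ`, `δ`
between consecutive transports, so `φ` commutes with it; and `π ↦ φ` is a product of the
conjugation isomorphisms `Equiv.permCongr`, hence a homomorphism, injective already on `U₁`.
-/

/-- Two vertices are equivalent (`x ∼̇ y`) if they have the same
out-neighbors and the same in-neighbors. -/
def dotSim {V : Type*} (E : V → V → Prop) (x y : V) : Prop :=
  (∀ z, E x z ↔ E y z) ∧ (∀ z, E z x ↔ E z y)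

/-- `U` and `W` are the color classes of a 2-colored digraph with edge relation `E`:
they partition the vertex set and every edge has one endpoint in each class. -/
def IsTwoColored {V : Type*} (E : V → V → Prop) (U W : Set V) : Prop :=
  (∀ v, v ∈ U ∨ v ∈ W) ∧ (∀ v, ¬(v ∈ U ∧ v ∈ W)) ∧
    ∀ u v, E u v → (u ∈ U ∧ v ∈ W) ∨ (u ∈ W ∧ v ∈ U)

/-- Axiom (N1). -/
def AxN1 {V : Type*} (E : V → V → Prop) : Prop :=
  ∀ u v, u ≠ v → ¬E u v → ¬E v u → ∀ w t, ¬(E u t ∧ E v w ∧ E t w)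

/-- Axiom (N2): bi-transitivity. -/
def AxN2 {V : Type*} (E : V → V → Prop) : Prop :=
  ∀ u v w t, E u v → E v w → E w t → E u t

/-- Axiom (N3). -/
def AxN3 {V : Type*} (E : V → V → Prop) : Prop :=
  ∀ u v w, E u w → E v w → (∀ z, E u z → E v z) ∨ (∀ z, E v z → E u z)

/-- A 2-qBMG: an irreflexive 2-colored digraph satisfying (N1), (N2), (N3). -/
def IsQBMG {V : Type*} (E : V → V → Prop) (U W : Set V) : Prop :=
  (∀ v, ¬E v v) ∧ IsTwoColored E U W ∧ AxN1 E ∧ AxN2 E ∧ AxN3 E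

/-- An automorphism of the digraph: a permutation mapping edges to edges. -/
def IsAut {V : Type*} (E : V → V → Prop) (π : Equiv.Perm V) : Prop :=
  ∀ u v, E u v → E (π u) (π v)

/-- A color-preserving automorphism of the 2-colored digraph. -/
def IsAutI {V : Type*} (E : V → V → Prop) (U W : Set V) (π : Equiv.Perm V) : Prop :=
  IsAut E π ∧ (∀ v ∈ U, π v ∈ U) ∧ (∀ v ∈ W, π v ∈ W)

/-- The edge relation of Example "ex2310204": on the disjoint union
`U₁ ⊔ W₁ ⊔ U₂ ⊔ W₂`, the edges are exactly `u → α u` (`u ∈ U₁`), `w → β w` (`w ∈ W₁`),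
`u → γ u` (`u ∈ U₂`) and `u → δ u = γ (β (α u))` (`u ∈ U₁`). -/
def exEdges {U₁ W₁ U₂ W₂ : Type*} (α : U₁ ≃ W₁) (β : W₁ ≃ U₂) (γ : U₂ ≃ W₂) :
    (U₁ ⊕ W₁ ⊕ U₂ ⊕ W₂) → (U₁ ⊕ W₁ ⊕ U₂ ⊕ W₂) → Prop
  | Sum.inl u, Sum.inr (Sum.inl w) => w = α u
  | Sum.inr (Sum.inl w), Sum.inr (Sum.inr (Sum.inl u)) => u = β w
  | Sum.inr (Sum.inr (Sum.inl u)), Sum.inr (Sum.inr (Sum.inr w)) => w = γ u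
  | Sum.inl u, Sum.inr (Sum.inr (Sum.inr w)) => w = γ (β (α u))
  | _, _ => False

/-- The color class `U = U₁ ∪ U₂` of the example. -/
def exU (U₁ W₁ U₂ W₂ : Type*) : Set (U₁ ⊕ W₁ ⊕ U₂ ⊕ W₂) :=
  {v | match v with
       | Sum.inl _ => True
       | Sum.inr (Sum.inr (Sum.inl _)) => True
       | _ => False}

/-- The color class `W = W₁ ∪ W₂` of the example. -/
def exW (U₁ W₁ U₂ W₂ : Type*) : Set (U₁ ⊕ W₁ ⊕ U₂ ⊕ W₂) :=
  {v | match v with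
       | Sum.inr (Sum.inl _) => True
       | Sum.inr (Sum.inr (Sum.inr _)) => True
       | _ => False}

/-- The permutation `φ` attached to a permutation `π` of `U₁`: it acts as `π` on `U₁`,
as `α ∘ π ∘ α⁻¹` on `W₁`, as `(β∘α) ∘ π ∘ (β∘α)⁻¹` on `U₂` and as `δ ∘ π ∘ δ⁻¹`
(with `δ = γ ∘ β ∘ α`) on `W₂`. -/
def exPhi {U₁ W₁ U₂ W₂ : Type*} (α : U₁ ≃ W₁) (β : W₁ ≃ U₂) (γ : U₂ ≃ W₂)
    (π : Equiv.Perm U₁) : Equiv.Perm (U₁ ⊕ W₁ ⊕ U₂ ⊕ W₂) :=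
  Equiv.sumCongr π (Equiv.sumCongr (α.symm.trans (π.trans α))
    (Equiv.sumCongr ((α.trans β).symm.trans (π.trans (α.trans β)))
      (((α.trans β).trans γ).symm.trans (π.trans ((α.trans β).trans γ)))))

section ExPhi

variable {U₁ W₁ U₂ W₂ : Type*} (α : U₁ ≃ W₁) (β : W₁ ≃ U₂) (γ : U₂ ≃ W₂) (π : Equiv.Perm U₁)

@[simp]
theorem exPhi_inl (u : U₁) : exPhi α β γ π (Sum.inl u) = Sum.inl (π u) := rfl

@[simp]
theorem exPhi_inr_inl (w : W₁) :
    exPhi α β γ π (Sum.inr (Sum.inl w)) = Sum.inr (Sum.inl (α (π (α.symm w)))) := rfl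

@[simp]
theorem exPhi_inr_inr_inl (u : U₂) :
    exPhi α β γ π (Sum.inr (Sum.inr (Sum.inl u))) =
      Sum.inr (Sum.inr (Sum.inl (β (α (π (α.symm (β.symm u))))))) := rfl

@[simp]
theorem exPhi_inr_inr_inr (w : W₂) :
    exPhi α β γ π (Sum.inr (Sum.inr (Sum.inr w))) =
      Sum.inr (Sum.inr (Sum.inr (γ (β (α (π (α.symm (β.symm (γ.symm w))))))))) := rfl

theorem exPhi_eq_sumCongr_permCongr :
    exPhi α β γ π =
      Equiv.sumCongr π (Equiv.sumCongr (α.permCongr π)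
        (Equiv.sumCongr ((α.trans β).permCongr π) (((α.trans β).trans γ).permCongr π))) :=
  rfl

theorem exPhi_isAut : IsAut (exEdges α β γ) (exPhi α β γ π) := by
  rintro (u | w | u | w) (u' | w' | u' | w') h <;> simp_all [exEdges]

theorem exPhi_mem_exU {v : U₁ ⊕ W₁ ⊕ U₂ ⊕ W₂} (hv : v ∈ exU U₁ W₁ U₂ W₂) :
    exPhi α β γ π v ∈ exU U₁ W₁ U₂ W₂ := by
  rcases v with u | w | u | w <;> simp_all [exU]

theorem exPhi_mem_exW {v : U₁ ⊕ W₁ ⊕ U₂ ⊕ W₂} (hv : v ∈ exW U₁ W₁ U₂ W₂) :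
    exPhi α β γ π v ∈ exW U₁ W₁ U₂ W₂ := by
  rcases v with u | w | u | w <;> simp_all [exW]

theorem exPhi_isAutI :
    IsAutI (exEdges α β γ) (exU U₁ W₁ U₂ W₂) (exW U₁ W₁ U₂ W₂) (exPhi α β γ π) :=
  ⟨exPhi_isAut α β γ π, fun _ => exPhi_mem_exU α β γ π, fun _ => exPhi_mem_exW α β γ π⟩

theorem exPhi_injective : Function.Injective (exPhi α β γ) := fun σ τ h =>
  Equiv.ext fun u => by simpa using congrArg (· (Sum.inl u)) h

theorem exPhi_mul (σ : Equiv.Perm U₁) :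
    exPhi α β γ (π * σ) = exPhi α β γ π * exPhi α β γ σ := by
  simp only [exPhi_eq_sumCongr_permCongr, Equiv.permCongr_mul, Equiv.Perm.sumCongr_mul]

end ExPhi

theorem stmt_14_general {U₁ W₁ U₂ W₂ : Type*}
    (α : U₁ ≃ W₁) (β : W₁ ≃ U₂) (γ : U₂ ≃ W₂) :
    (∀ π : Equiv.Perm U₁, ∀ u : U₁,
        exPhi α β γ π (Sum.inl u) = Sum.inl (π u)) ∧
    (∀ π : Equiv.Perm U₁, ∀ w : W₁,
        exPhi α β γ π (Sum.inr (Sum.inl w)) = Sum.inr (Sum.inl (α (π (α.symm w))))) ∧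
    (∀ π : Equiv.Perm U₁, ∀ u : U₂,
        exPhi α β γ π (Sum.inr (Sum.inr (Sum.inl u))) =
          Sum.inr (Sum.inr (Sum.inl (β (α (π (α.symm (β.symm u)))))))) ∧
    (∀ π : Equiv.Perm U₁, ∀ w : W₂,
        exPhi α β γ π (Sum.inr (Sum.inr (Sum.inr w))) =
          Sum.inr (Sum.inr (Sum.inr (γ (β (α (π (α.symm (β.symm (γ.symm w)))))))))) ∧
    (∀ π : Equiv.Perm U₁,
        IsAutI (exEdges α β γ) (exU U₁ W₁ U₂ W₂) (exW U₁ W₁ U₂ W₂) (exPhi α β γ π)) ∧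
    Function.Injective (exPhi α β γ) ∧
    (∀ π σ : Equiv.Perm U₁, exPhi α β γ (π * σ) = exPhi α β γ π * exPhi α β γ σ) :=
  ⟨exPhi_inl α β γ, exPhi_inr_inl α β γ, exPhi_inr_inr_inl α β γ, exPhi_inr_inr_inr α β γ,
    exPhi_isAutI α β γ, exPhi_injective α β γ, exPhi_mul α β γ⟩

/-- With the digraph of Statement 13, for every permutation `π` of
`U₁` the map `φ = exPhi α β γ π` (given piecewise by `π`, `α∘π∘α⁻¹`, `(β∘α)∘π∘(β∘α)⁻¹`
and `δ∘π∘δ⁻¹`) is a color-preserving automorphism of `G`, and `π ↦ φ` is an injective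
group homomorphism from `Sym(U₁)` into `Aut_I(G)`. -/
theorem stmt_14 {U₁ W₁ U₂ W₂ : Type*}
    [Fintype U₁] [Fintype W₁] [Fintype U₂] [Fintype W₂]
    [DecidableEq U₁] [DecidableEq W₁] [DecidableEq U₂] [DecidableEq W₂]
    (m : ℕ) (hm : 1 ≤ m)
    (hU₁ : Fintype.card U₁ = m) (hW₁ : Fintype.card W₁ = m)
    (hU₂ : Fintype.card U₂ = m) (hW₂ : Fintype.card W₂ = m)
    (α : U₁ ≃ W₁) (β : W₁ ≃ U₂) (γ : U₂ ≃ W₂) :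
    (∀ π : Equiv.Perm U₁, ∀ u : U₁,
        exPhi α β γ π (Sum.inl u) = Sum.inl (π u)) ∧
    (∀ π : Equiv.Perm U₁, ∀ w : W₁,
        exPhi α β γ π (Sum.inr (Sum.inl w)) = Sum.inr (Sum.inl (α (π (α.symm w))))) ∧
    (∀ π : Equiv.Perm U₁, ∀ u : U₂,
        exPhi α β γ π (Sum.inr (Sum.inr (Sum.inl u))) =
          Sum.inr (Sum.inr (Sum.inl (β (α (π (α.symm (β.symm u)))))))) ∧
    (∀ π : Equiv.Perm U₁, ∀ w : W₂,
        exPhi α β γ π (Sum.inr (Sum.inr (Sum.inr w))) =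
          Sum.inr (Sum.inr (Sum.inr (γ (β (α (π (α.symm (β.symm (γ.symm w)))))))))) ∧
    (∀ π : Equiv.Perm U₁,
        IsAutI (exEdges α β γ) (exU U₁ W₁ U₂ W₂) (exW U₁ W₁ U₂ W₂) (exPhi α β γ π)) ∧
    Function.Injective (exPhi α β γ) ∧
    (∀ π σ : Equiv.Perm U₁, exPhi α β γ (π * σ) = exPhi α β γ π * exPhi α β γ σ) :=
  stmt_14_general α β γ
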